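/- arXiv:1006.2212 — 11 statements merged into one kernel-verified Lean document; each statement's English description precedes it below -/
import Mathlib

section
/- For the polynomial p_f(t) = t^{2j+1} + t^{2j} - f t + f with j a positive natural number and f a real number, if z is a complex root of p_f satisfying |z - (-1)| > 2|f|/(1 - |f|) and |f| < 1, then |z| < 1. -/
/-! A root with `‖z‖ ≥ 1` satisfies `z ^ (2j) (z + 1) = f (z - 1)`, so
`‖z + 1‖ ≤ ‖z‖ ^ (2j) ‖z + 1‖ = |f| ‖z - 1‖ ≤ |f| (‖z + 1‖ + 2)`, i.e. `z` lies within
`2|f| / (1 - |f|)` of `-1`. -/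

theorem norm_sub_one_le_norm_add_one_add_two {𝕜 : Type*} [NormedRing 𝕜] [NormOneClass 𝕜]
    (z : 𝕜) : ‖z - 1‖ ≤ ‖z + 1‖ + 2 :=
  calc ‖z - 1‖ = ‖(z + 1) - (1 + 1)‖ := by congr 1; abel
    _ ≤ ‖z + 1‖ + ‖(1 : 𝕜) + 1‖ := norm_sub_le _ _
    _ ≤ ‖z + 1‖ + 2 := by
      gcongr
      exact (norm_add_le _ _).trans (by norm_num)

theorem one_sub_norm_mul_norm_add_one_le {𝕜 : Type*} [NormedDivisionRing 𝕜] {z c : 𝕜} {n : ℕ}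
    (hz : 1 ≤ ‖z‖) (h : z ^ n * (z + 1) = c * (z - 1)) :
    (1 - ‖c‖) * ‖z + 1‖ ≤ 2 * ‖c‖ := by
  have hnorm : ‖z‖ ^ n * ‖z + 1‖ = ‖c‖ * ‖z - 1‖ := by
    simpa only [norm_mul, norm_pow] using congrArg norm h
  have hpow : ‖z + 1‖ ≤ ‖z‖ ^ n * ‖z + 1‖ :=
    le_mul_of_one_le_left (norm_nonneg _) (one_le_pow₀ hz)
  have hsub : ‖c‖ * ‖z - 1‖ ≤ ‖c‖ * (‖z + 1‖ + 2) :=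
    mul_le_mul_of_nonneg_left (norm_sub_one_le_norm_add_one_add_two z) (norm_nonneg c)
  linarith

theorem stmt_0_general (j : ℕ) (f : ℝ) (hf : |f| < 1)
    (z : ℂ) (hz : z ^ (2 * j + 1) + z ^ (2 * j) - (f : ℂ) * z + (f : ℂ) = 0)
    (hdist : ‖z - (-1)‖ > 2 * |f| / (1 - |f|)) :
    ‖z‖ < 1 := by
  by_contra! hle
  have hfactor : z ^ (2 * j) * (z + 1) = (f : ℂ) * (z - 1) := by linear_combination hz
  have hclose := one_sub_norm_mul_norm_add_one_le hle hfactor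
  rw [Complex.norm_real, Real.norm_eq_abs] at hclose
  rw [sub_neg_eq_add, gt_iff_lt, div_lt_iff₀ (by linarith)] at hdist
  linarith

theorem stmt_0 (j : ℕ) (hj : 1 ≤ j) (f : ℝ) (hf : |f| < 1)
    (z : ℂ) (hz : z ^ (2 * j + 1) + z ^ (2 * j) - (f : ℂ) * z + (f : ℂ) = 0)
    (hdist : ‖z - (-1)‖ > 2 * |f| / (1 - |f|)) :
    ‖z‖ < 1 :=
  stmt_0_general j f hf z hz hdist
end

section
/- For every natural number j ≥ 1 there exists δ_j > 0 such that for every f ∈ (-δ_j, 0), every complex root z of the polynomial p_f(t) = t^{2j+1} + t^{2j} - f t + f satisfies |z| < 1. -/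
/-!
Write `f = -a` with `a > 0`; a root then satisfies `z ^ (2j) * (z + 1) = a * (1 - z)`. If `‖z‖ ≥ 1`,
taking norms gives `‖z + 1‖ ≤ 3a`, so `z` is close to `-1` and, the exponent being even, `z ^ (2j)`
is within `exp (6ja) - 1` of `1`. Hence `z + 1 ≈ a * (1 - z) ≈ 2a` has real part at least `a - 3a²`,
and `‖z‖² = ‖z + 1‖² - 2 Re (z + 1) + 1 ≤ 1 - 2a + 15a² < 1`.
-/

open Complex

theorem norm_pow_sub_one_le {R : Type*} [SeminormedRing R] [NormOneClass R] (w : R) (n : ℕ) :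
    ‖w ^ n - 1‖ ≤ (1 + ‖w - 1‖) ^ n - 1 := by
  induction n with
  | zero => simp
  | succ n ih =>
    have hw : ‖w‖ ≤ 1 + ‖w - 1‖ := by
      simpa using norm_add_le 1 (w - 1)
    calc ‖w ^ (n + 1) - 1‖ = ‖w * (w ^ n - 1) + (w - 1)‖ := by
          rw [pow_succ', mul_sub, mul_one, sub_add_sub_cancel]
      _ ≤ ‖w‖ * ‖w ^ n - 1‖ + ‖w - 1‖ :=
          (norm_add_le _ _).trans (by gcongr; exact norm_mul_le _ _)
      _ ≤ (1 + ‖w - 1‖) * ((1 + ‖w - 1‖) ^ n - 1) + ‖w - 1‖ := by gcongr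
      _ = (1 + ‖w - 1‖) ^ (n + 1) - 1 := by ring

theorem Real.one_add_pow_le_exp_mul (x : ℝ) (hx : 0 ≤ x) (n : ℕ) :
    (1 + x) ^ n ≤ Real.exp (n * x) := by
  rw [Real.exp_nat_mul]
  gcongr
  linarith [Real.add_one_le_exp x]

theorem norm_add_one_le_of_pow_mul_add_one_eq {n : ℕ} {a : ℝ} {z : ℂ} (ha : 0 ≤ a)
    (ha3 : a ≤ 1 / 3) (hz : 1 ≤ ‖z‖) (h : z ^ n * (z + 1) = a * (1 - z)) : ‖z + 1‖ ≤ 3 * a := by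
  have hnorm : ‖z‖ ^ n * ‖z + 1‖ = a * ‖1 - z‖ := by
    simpa [norm_mul, norm_pow, abs_of_nonneg ha] using congrArg norm h
  have hsub : ‖1 - z‖ ≤ 1 + ‖z‖ := by simpa using norm_sub_le (1 : ℂ) z
  have hadd : ‖z + 1‖ ≤ a * (1 + ‖z‖) := by
    calc ‖z + 1‖ ≤ ‖z‖ ^ n * ‖z + 1‖ := le_mul_of_one_le_left (norm_nonneg _) (one_le_pow₀ hz)
      _ ≤ a * (1 + ‖z‖) := by rw [hnorm]; gcongr
  have htri : ‖z‖ ≤ ‖z + 1‖ + 1 := by simpa using norm_sub_le (z + 1) 1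
  nlinarith

theorem norm_lt_one_of_pow_mul_add_one_eq_of_norm_add_one_le {n : ℕ} {a : ℝ} {z : ℂ}
    (ha : 0 < a) (ha8 : a ≤ 1 / 8) (hw : ‖z + 1‖ ≤ 3 * a) (herr : ‖(z + 1) * (z ^ n - 1)‖ ≤ a)
    (h : z ^ n * (z + 1) = a * (1 - z)) : ‖z‖ < 1 := by
  have hsplit : z + 1 = a * (1 - z) - (z + 1) * (z ^ n - 1) := by linear_combination h
  have hre : z.re + 1 = a * (1 - z.re) - ((z + 1) * (z ^ n - 1)).re := by
    simpa using congrArg re hsplit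
  have herr_re : ((z + 1) * (z ^ n - 1)).re ≤ a := (re_le_norm _).trans herr
  have hw_re : z.re + 1 ≤ 3 * a := by simpa using (re_le_norm (z + 1)).trans hw
  have hw_sq : (z.re + 1) ^ 2 + z.im ^ 2 ≤ (3 * a) ^ 2 := by
    have : ‖z + 1‖ ^ 2 ≤ (3 * a) ^ 2 := by gcongr
    simpa [Complex.sq_norm, normSq_apply, ← sq] using this
  have : ‖z‖ ^ 2 < 1 := by
    rw [Complex.sq_norm, normSq_apply]
    nlinarith
  nlinarith [norm_nonneg z]

theorem norm_lt_one_of_pow_mul_add_one_eq {n : ℕ} {a : ℝ} {z : ℂ} (hn : Even n) (hn0 : n ≠ 0)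
    (ha : 0 < a) (han : a ≤ 1 / (12 * n)) (h : z ^ n * (z + 1) = a * (1 - z)) : ‖z‖ < 1 := by
  have hn1 : (1 : ℝ) ≤ n := by exact_mod_cast Nat.one_le_iff_ne_zero.mpr hn0
  have hna : n * a ≤ 1 / 12 := by
    rw [le_div_iff₀ (by positivity)] at han
    linarith
  have ha8 : a ≤ 1 / 8 := by nlinarith
  by_contra! hz
  have hw := norm_add_one_le_of_pow_mul_add_one_eq ha.le (by linarith) hz h
  have hpow : ‖z ^ n - 1‖ ≤ 1 / 3 :=
    calc ‖z ^ n - 1‖ = ‖(-z) ^ n - 1‖ := by rw [hn.neg_pow]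
      _ ≤ (1 + ‖z + 1‖) ^ n - 1 := by
        have := norm_pow_sub_one_le (-z) n
        rwa [show -z - 1 = -(z + 1) by ring, norm_neg] at this
      _ ≤ Real.exp (n * ‖z + 1‖) - 1 := by
        gcongr; exact Real.one_add_pow_le_exp_mul _ (norm_nonneg _) n
      _ ≤ Real.exp (1 / 4) - 1 := by gcongr; nlinarith
      _ ≤ 1 / 3 := by
        have := Real.exp_bound_div_one_sub_of_interval (x := 1 / 4) (by norm_num) (by norm_num)
        linarith
  have herr : ‖(z + 1) * (z ^ n - 1)‖ ≤ a :=
    calc ‖(z + 1) * (z ^ n - 1)‖ = ‖z + 1‖ * ‖z ^ n - 1‖ := norm_mul _ _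
      _ ≤ (3 * a) * (1 / 3) := by gcongr
      _ = a := by ring
  exact (norm_lt_one_of_pow_mul_add_one_eq_of_norm_add_one_le ha ha8 hw herr h).not_ge hz

theorem stmt_1 (j : ℕ) (hj : 1 ≤ j) :
    ∃ δ : ℝ, δ > 0 ∧ ∀ f : ℝ, f ∈ Set.Ioo (-δ) 0 →
      ∀ z : ℂ, z ^ (2 * j + 1) + z ^ (2 * j) - (f : ℂ) * z + (f : ℂ) = 0 →
        ‖z‖ < 1 := by
  have hj0 : (0 : ℝ) < j := by exact_mod_cast hj
  refine ⟨1 / (12 * (2 * j)), by positivity, ?_⟩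
  rintro f ⟨hδf, hf0⟩ z hz
  refine norm_lt_one_of_pow_mul_add_one_eq (even_two_mul j) (by lia) (neg_pos.mpr hf0) ?_ ?_
  · push_cast
    linarith
  · push_cast
    linear_combination hz
end

section
/- If f < 0 and λ ∈ (3 - 2√2, 3 + √2), then p_f((λ|f|)^{1/(2j+1)}) > 0, where p_f(t) = t^{2j+1} + t^{2j} - f t + f. -/
theorem stmt_3 (j : ℕ) (hj : 1 ≤ j) (f : ℝ) (hf : f < 0)
    (lam : ℝ) (hlam1 : 3 - 2 * Real.sqrt 2 < lam) (hlam2 : lam < 3 + Real.sqrt 2) :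
    0 < (fun t : ℝ => t ^ (2 * j + 1) + t ^ (2 * j) - f * t + f)
      ((lam * |f|) ^ ((1 : ℝ) / (2 * j + 1))) := by
  have hs2 : Real.sqrt 2 ^ 2 = 2 := Real.sq_sqrt (by norm_num)
  have hs2' : 1 < Real.sqrt 2 := by nlinarith [Real.sqrt_nonneg 2]
  have hlam0 : 0 < lam := by nlinarith
  have hfne : |f| > 0 := abs_pos.mpr hf.ne
  have hF : 0 < lam * |f| := mul_pos hlam0 hfne
  set t := (lam * |f|) ^ ((1 : ℝ) / (2 * j + 1)) with htdef
  have ht : 0 < t := Real.rpow_pos_of_pos hF _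
  have key : t ^ (2 * j + 1) = lam * |f| := by
    rw [htdef, ← Real.rpow_natCast _ (2 * j + 1), ← Real.rpow_mul hF.le]
    push_cast
    rw [one_div, inv_mul_cancel₀ (by positivity), Real.rpow_one]
  have habs : |f| = -f := abs_of_neg hf
  rw [habs] at key
  have hkey2 : t ^ (2 * j) * t = lam * (-f) := by
    rw [← pow_succ, key]
  have hq : 0 < t ^ 2 + (lam - 1) * t + lam := by
    nlinarith [sq_nonneg (t + (lam - 1) / 2)]
  simp only
  nlinarith [mul_pos hlam0 ht, mul_pos (mul_pos hlam0 (neg_pos.2 hf)) hq,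
    pow_pos ht (2 * j), key, hkey2]
end

section
/- If f < 0 and f > -(1/(2j)) ((2j-1)/(2j+1))^{2j}, then p_f(-(2j|f|)^{1/(2j)}) > 0, where p_f(t) = t^{2j+1} + t^{2j} - f t + f. -/
theorem stmt_5 (j : ℕ) (hj : 1 ≤ j) (f : ℝ) (hf : f < 0)
    (hf2 : f > -(1 / (2 * j)) * ((2 * (j : ℝ) - 1) / (2 * j + 1)) ^ (2 * j)) :
    0 < (fun t : ℝ => t ^ (2 * j + 1) + t ^ (2 * j) - f * t + f)
      (-(((2 * j : ℝ) * |f|) ^ ((1 : ℝ) / (2 * j)))) := by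
  simp only
  rw [show (2*(j:ℝ)) = ((2*j:ℕ):ℝ) by push_cast; ring]
  have hjR : (1 : ℝ) ≤ (j : ℝ) := by exact_mod_cast hj
  set n : ℕ := 2 * j with hn
  have hnR : (2 : ℝ) ≤ (n : ℝ) := by
    push_cast [hn]; linarith
  have hn0 : (n : ℝ) ≠ 0 := by linarith
  have hg : (0 : ℝ) < -f := by linarith
  have habs : |f| = -f := abs_of_neg hf
  set x : ℝ := ((n : ℝ) * |f|) ^ ((1 : ℝ) / n) with hxdef
  have hbase : (0 : ℝ) ≤ (n : ℝ) * |f| := by positivity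
  have hxpos : 0 < x := Real.rpow_pos_of_pos (by rw [habs]; positivity) _
  have hxn : x ^ n = (n : ℝ) * |f| := by
    rw [hxdef, ← Real.rpow_natCast (((n : ℝ) * |f|) ^ ((1:ℝ)/n)) n,
      ← Real.rpow_mul hbase, one_div, inv_mul_cancel₀ hn0, Real.rpow_one]
  -- x < (n-1)/(n+1)
  set c : ℝ := ((n : ℝ) - 1) / ((n : ℝ) + 1) with hc
  have hcnn : (0 : ℝ) ≤ c := by
    apply div_nonneg <;> linarith
  have hxltc : x < c := by
    apply lt_of_pow_lt_pow_left₀ n hcnn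
    rw [hxn, habs]
    have h2 : -f < 1 / (n : ℝ) * c ^ n := by
      have := hf2
      push_cast [hn, hc] at this ⊢
      linarith
    have : (n : ℝ) * -f < (n : ℝ) * (1 / (n : ℝ) * c ^ n) := by
      apply mul_lt_mul_of_pos_left h2; linarith
    calc (n : ℝ) * -f < (n : ℝ) * (1 / (n : ℝ) * c ^ n) := this
      _ = c ^ n := by field_simp
  have heven : Even n := ⟨j, by omega⟩
  have h1 : (-x) ^ (n + 1) = -(x ^ (n + 1)) := by
    rw [pow_succ, heven.neg_pow, pow_succ]; ring
  have h2 : (-x) ^ n = x ^ n := heven.neg_pow x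
  rw [h1, h2, pow_succ, hxn, habs]
  have key : ((n : ℝ) + 1) * x < (n : ℝ) - 1 := by
    have hp : (0:ℝ) < (n:ℝ)+1 := by linarith
    have := (lt_div_iff₀ hp).mp hxltc
    linarith
  nlinarith [mul_pos hg hxpos, mul_lt_mul_of_pos_left key hg]
end

section
/- If f < 0 and f > -(1/(2j)) ((2j-1)/(2j+1))^{2j}, then p_f((|f|/(2j))^{1/(2j)}) < 0, where p_f(t) = t^{2j+1} + t^{2j} - f t + f. -/
theorem stmt_7 (j : ℕ) (hj : 1 ≤ j) (f : ℝ) (hf : f < 0)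
    (hf2 : f > -(1 / (2 * j)) * ((2 * (j : ℝ) - 1) / (2 * j + 1)) ^ (2 * j)) :
    (fun t : ℝ => t ^ (2 * j + 1) + t ^ (2 * j) - f * t + f)
      ((|f| / (2 * j)) ^ ((1 : ℝ) / (2 * j))) < 0 := by
  have hj2 : (2:ℝ) ≤ 2 * j := by
    have : (1:ℝ) ≤ j := by exact_mod_cast hj
    linarith
  set R : ℝ := (2 * (j:ℝ) - 1) / (2 * j + 1) with hRdef
  have hRpos : 0 < R := by
    apply div_pos <;> linarith
  set a : ℝ := |f| / (2 * j) with haa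
  have hfa : |f| = -f := abs_of_neg hf
  have ha : 0 < a := by
    apply div_pos
    · rw [hfa]; linarith
    · linarith
  set t0 : ℝ := a ^ ((1:ℝ)/(2*j)) with ht0def
  have ht0 : 0 ≤ t0 := Real.rpow_nonneg ha.le _
  have hkey : t0 ^ (2 * j) = a := by
    rw [ht0def, ← Real.rpow_natCast (a ^ ((1:ℝ)/(2*(j:ℝ)))) (2*j), ← Real.rpow_mul ha.le]
    push_cast
    rw [one_div, inv_mul_cancel₀ (by linarith), Real.rpow_one]
  have hRp : 0 < R ^ (2*j) := pow_pos hRpos _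
  have h1 : 1/(2*(j:ℝ)) ≤ 1 := by
    rw [div_le_one (by linarith)]; linarith
  have haf : a ≤ -f := by
    rw [haa, hfa]
    exact div_le_self (by linarith) (by linarith)
  have haR : a < R ^ (2*j) := by nlinarith [hf2]
  have ht0R : t0 < R := by
    have h2 : t0 ^ (2*j) < R ^ (2*j) := by rw [hkey]; exact haR
    exact lt_of_pow_lt_pow_left₀ _ hRpos.le h2
  have hRmul : R * (2*(j:ℝ)+1) = 2*j-1 := by
    rw [hRdef]; field_simp
  have hf_eq : f = -(2*(j:ℝ)) * a := by
    rw [haa, hfa]; field_simp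
  show t0 ^ (2*j+1) + t0 ^ (2*j) - f * t0 + f < 0
  have hpow : t0 ^ (2*j+1) = a * t0 := by rw [pow_succ, hkey, mul_comm]
  rw [hpow, hkey, hf_eq]
  nlinarith [mul_lt_mul_of_pos_left ht0R ha, hRmul, hj2, ha, mul_pos ha hRpos]
end

section
/- If f < 0 and f > -(1/(2j)) ((2j-1)/(2j+1))^{2j}, then p_f(t) = t^{2j+1} + t^{2j} - f t + f has at least three real roots: one in (-1, -(2j-1)/(2j+1)), one in (-(2j|f|)^{1/(2j)}, -|f|^{1/(2j)}), and one in ((|f|/(2j))^{1/(2j)}, 1). -/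
set_option maxHeartbeats 1000000 in
theorem stmt_8 (j : ℕ) (hj : 1 ≤ j) (f : ℝ) (hf : f < 0)
    (hf2 : f > -(1 / (2 * j)) * ((2 * (j : ℝ) - 1) / (2 * j + 1)) ^ (2 * j)) :
    (∃ t ∈ Set.Ioo (-1 : ℝ) (-(2 * (j : ℝ) - 1) / (2 * j + 1)),
        t ^ (2 * j + 1) + t ^ (2 * j) - f * t + f = 0) ∧
    (∃ t ∈ Set.Ioo (-(((2 * j : ℝ) * |f|) ^ ((1 : ℝ) / (2 * j))))
        (-(|f| ^ ((1 : ℝ) / (2 * j)))),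
        t ^ (2 * j + 1) + t ^ (2 * j) - f * t + f = 0) ∧
    (∃ t ∈ Set.Ioo ((|f| / (2 * j)) ^ ((1 : ℝ) / (2 * j))) (1 : ℝ),
        t ^ (2 * j + 1) + t ^ (2 * j) - f * t + f = 0) := by
  have hj1 : (1:ℝ) ≤ (j:ℝ) := by exact_mod_cast hj
  have hfpos : 0 < -f := by linarith
  have habs : |f| = -f := abs_of_neg hf
  set n : ℕ := 2 * j with hn
  have hnR : ((n:ℝ)) = 2 * (j:ℝ) := by rw [hn]; push_cast; ring
  have hn0 : n ≠ 0 := by omega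
  set q : ℝ := (2*(j:ℝ)-1)/(2*(j:ℝ)+1) with hq
  have hq0 : 0 ≤ q := by
    apply div_nonneg <;> linarith
  have hq1 : q < 1 := by
    rw [hq, div_lt_one (by linarith)]; linarith
  -- key inequality
  have hkey : 2*(j:ℝ)*(-f) < q ^ n := by
    have h2 : 2*(j:ℝ) * (-(1/(2*(j:ℝ))) * q^n) = -q^n := by
      field_simp
    have h3 := mul_lt_mul_of_pos_left (gt_iff_lt.mp hf2) (show (0:ℝ) < 2*(j:ℝ) by linarith)
    linarith
  set g : ℝ → ℝ := fun t => t ^ (n+1) + t ^ n - f * t + f with hg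
  have hgc : Continuous g := by
    rw [hg]; continuity
  have hev : Even n := ⟨j, by omega⟩
  have gneg : ∀ x : ℝ, g (-x) = -(x^n * x) + x^n + f*x + f := by
    intro x
    simp only [hg, pow_succ, hev.neg_pow]
    ring
  have ivt_inc : ∀ a b : ℝ, a < b → g a < 0 → 0 < g b →
      ∃ t ∈ Set.Ioo a b, g t = 0 := by
    intro a b hab ha hb
    obtain ⟨t, ht, ht0⟩ := intermediate_value_Ioo hab.le hgc.continuousOn
      (Set.mem_Ioo.mpr ⟨ha, hb⟩)
    exact ⟨t, ht, ht0⟩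
  have ivt_dec : ∀ a b : ℝ, a < b → 0 < g a → g b < 0 →
      ∃ t ∈ Set.Ioo a b, g t = 0 := by
    intro a b hab ha hb
    obtain ⟨t, ht, ht0⟩ := intermediate_value_Ioo' hab.le hgc.continuousOn
      (Set.mem_Ioo.mpr ⟨hb, ha⟩)
    exact ⟨t, ht, ht0⟩
  -- the rpow root helper
  have hroot : ∀ x : ℝ, 0 ≤ x → (x ^ ((1:ℝ)/(2*(j:ℝ)))) ^ n = x := by
    intro x hx
    rw [← Real.rpow_natCast (x ^ ((1:ℝ)/(2*(j:ℝ)))) n, ← Real.rpow_mul hx, hnR]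
    rw [one_div, inv_mul_cancel₀ (by linarith), Real.rpow_one]
  refine ⟨?_, ?_, ?_⟩
  · -- first root in (-1, -q)
    have hbeq : -(2 * (j:ℝ) - 1) / (2 * (j:ℝ) + 1) = -q := by
      rw [hq, neg_div]
    rw [hbeq]
    have h1 : g (-1) < 0 := by
      rw [gneg]
      simp only [one_pow]
      linarith
    have h2 : 0 < g (-q) := by
      rw [gneg]
      have hiden : (1-q)*(2*(j:ℝ)) = 1+q := by
        rw [hq]; field_simp; ring
      nlinarith [mul_lt_mul_of_pos_left hkey (show (0:ℝ) < 1-q by linarith)]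
    exact ivt_inc (-1) (-q) (by linarith) h1 h2
  · -- second root in (-d, -c)
    set c : ℝ := |f| ^ ((1:ℝ)/(2*(j:ℝ))) with hc
    set d : ℝ := (2*(j:ℝ)*|f|) ^ ((1:ℝ)/(2*(j:ℝ))) with hd
    have hc0 : 0 < c := Real.rpow_pos_of_pos (abs_pos.mpr hf.ne) _
    have hd0 : 0 < d := Real.rpow_pos_of_pos (mul_pos (by linarith) (abs_pos.mpr hf.ne)) _
    have hcn : c ^ n = -f := by rw [hc, hroot _ (abs_nonneg f), habs]
    have hdn : d ^ n = 2*(j:ℝ)*(-f) := by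
      rw [hd, hroot _ (by positivity), habs]
    have hdq : d < q := by
      apply lt_of_pow_lt_pow_left₀ n hq0
      rw [hdn]; exact hkey
    have hcd : c < d := by
      apply lt_of_pow_lt_pow_left₀ n hd0.le
      rw [hcn, hdn]; nlinarith
    have h1 : 0 < g (-d) := by
      rw [gneg, hdn]
      have hdlt : d*(2*(j:ℝ)+1) < 2*(j:ℝ)-1 := by
        rw [hq] at hdq
        exact (lt_div_iff₀ (by linarith)).mp hdq
      nlinarith [mul_pos hfpos (show (0:ℝ) < 2*(j:ℝ)-1-d*(2*(j:ℝ)+1) by linarith)]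
    have h2 : g (-c) < 0 := by
      rw [gneg, hcn]
      nlinarith [mul_pos hfpos hc0]
    exact ivt_dec (-d) (-c) (by linarith) h1 h2
  · -- third root in (e, 1)
    set e : ℝ := (|f|/(2*(j:ℝ))) ^ ((1:ℝ)/(2*(j:ℝ))) with he
    have he0 : 0 < e := Real.rpow_pos_of_pos (div_pos (abs_pos.mpr hf.ne) (by linarith)) _
    have hen : e ^ n = -f/(2*(j:ℝ)) := by
      rw [he, hroot _ (by positivity), habs]
    have henq : e ^ n < q ^ n := by
      rw [hen]
      have h4 : (1:ℝ) ≤ 2*(j:ℝ)*(2*(j:ℝ)) := by nlinarith [hj1]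
      have h1 : -f/(2*(j:ℝ)) ≤ 2*(j:ℝ)*(-f) := by
        rw [div_le_iff₀ (by linarith)]
        calc -f = 1*(-f) := by ring
          _ ≤ (2*(j:ℝ)*(2*(j:ℝ)))*(-f) := mul_le_mul_of_nonneg_right h4 hfpos.le
          _ = 2*(j:ℝ)*(-f)*(2*(j:ℝ)) := by ring
      linarith
    have heq : e < q := lt_of_pow_lt_pow_left₀ n hq0 henq
    have he1 : e < 1 := lt_trans heq hq1
    have h1 : g e < 0 := by
      have hge : g e = e^n * ((2*(j:ℝ)+1)*e - (2*(j:ℝ)-1)) := by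
        have hge' : g e = e^n * e + e^n - f*e + f := by
          simp only [hg, pow_succ]
        rw [hge', hen]
        field_simp
        ring
      rw [hge]
      apply mul_neg_of_pos_of_neg (pow_pos he0 n)
      have helt : e*(2*(j:ℝ)+1) < 2*(j:ℝ)-1 := by
        rw [hq] at heq
        exact (lt_div_iff₀ (by linarith)).mp heq
      linarith
    have h2 : 0 < g 1 := by
      simp only [hg, one_pow]
      linarith
    exact ivt_inc e 1 he1 h1 h2
end

section
/- For f real with f < 4j+1, the polynomial p_f(t) = t^{2j+1} + t^{2j} - f t + f has no real root in [1, ∞). -/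
theorem stmt_10 (j : ℕ) (hj : 1 ≤ j) (f : ℝ) (hf : f < 4 * j + 1) :
    ∀ t : ℝ, 1 ≤ t → t ^ (2 * j + 1) + t ^ (2 * j) - f * t + f ≠ 0 := by
  intro t ht
  have hs : 0 ≤ t - 1 := by linarith
  have hb1 : 1 + (2 * j : ℝ) * (t - 1) ≤ t ^ (2 * j) := by
    have h := one_add_mul_le_pow (a := t - 1) (by linarith) (2 * j)
    simpa using h
  have hb2 : 1 + (2 * j + 1 : ℝ) * (t - 1) ≤ t ^ (2 * j + 1) := by
    have h := one_add_mul_le_pow (a := t - 1) (by linarith) (2 * j + 1)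
    simpa using h
  have hprod : 0 ≤ (4 * j + 1 - f) * (t - 1) :=
    mul_nonneg (by linarith) hs
  have : 0 < t ^ (2 * j + 1) + t ^ (2 * j) - f * t + f := by
    push_cast at hb1 hb2
    nlinarith [hb1, hb2, hprod]
  linarith
end

section
/- For f ∈ (1 - √2, 0), the cubic p_f(t) = t^3 + t^2 - f t + f satisfies p_f(-f) < 0 and p_f(((-f)/5)^{1/3}) > 0; hence p_f has a real root in (-f, ((-f)/5)^{1/3}), and the other two roots of p_f have modulus strictly less than one. -/
/-!
With `p_f = cubic f`, write `g = -f ∈ (0, √2 - 1)` and `c = (g/5)^(1/3)`. Then `p_f(g) = g((1+g)² - 2) < 0`, and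
substituting `f = -5c³` gives `p_f(c) = c²(5c² - 4c + 1) > 0`; since `g² < 1/5` we have `g < c`,
so the intermediate value theorem yields a root `t ∈ (g, c)`. Dividing out `z - t` leaves
`z² + (t + 1)z + b` with `b = t² + t + g = g/t < 1` and `t + 1 < 1 + b`, and the Schur–Cohn
conditions `b < 1`, `|a| < 1 + b` put both roots of a real monic quadratic `z² + az + b`
in the open unit disc.
-/

def cubic {R : Type*} [CommRing R] (f z : R) : R :=
  z ^ 3 + z ^ 2 - f * z + f

lemma cubic_sub_cubic {R : Type*} [CommRing R] (f z t : R) :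
    cubic f z - cubic f t = (z - t) * (z ^ 2 + (t + 1) * z + (t ^ 2 + t - f)) := by
  unfold cubic
  ring

lemma continuous_cubic (f : ℝ) : Continuous (cubic f) := by
  unfold cubic
  fun_prop

lemma cubic_neg_self_neg {f : ℝ} (hf1 : 1 - √2 < f) (hf2 : f < 0) : cubic f (-f) < 0 := by
  have h : (1 - f) ^ 2 < 2 := (Real.lt_sqrt (by linarith)).mp (by linarith)
  calc cubic f (-f) = -f * ((1 - f) ^ 2 - 2) := by unfold cubic; ring
    _ < 0 := mul_neg_of_pos_of_neg (by linarith) (by linarith)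

lemma cubic_pos_of_pow_three_eq {f c : ℝ} (hc : c ≠ 0) (hc3 : c ^ 3 = -f / 5) :
    0 < cubic f c := by
  have hf : f = -5 * c ^ 3 := by linarith
  calc (0 : ℝ) < c ^ 2 * (5 * (c - 2 / 5) ^ 2 + 1 / 5) := by positivity
    _ = cubic f c := by rw [cubic, hf]; ring

lemma abs_lt_one_of_sq_add_mul_add_eq_zero {a b x : ℝ} (hb : b < 1) (ha : |a| < 1 + b)
    (hx : x ^ 2 + a * x + b = 0) : |x| < 1 := by
  rw [abs_lt] at ha ⊢
  constructor
  · by_contra! h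
    nlinarith [mul_nonneg (neg_nonneg.mpr (by linarith : x + 1 ≤ 0))
      (neg_nonneg.mpr (by linarith : x - 1 + a ≤ 0))]
  · by_contra! h
    nlinarith [mul_nonneg (by linarith : 0 ≤ x - 1) (by linarith : 0 ≤ x + 1 + a)]

lemma Complex.norm_lt_one_of_sq_add_mul_add_eq_zero {a b : ℝ} (hb : b < 1) (ha : |a| < 1 + b)
    {z : ℂ} (hz : z ^ 2 + a * z + b = 0) : ‖z‖ < 1 := by
  have hre : z.re ^ 2 - z.im ^ 2 + a * z.re + b = 0 := by
    simpa [sq] using congrArg Complex.re hz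
  have him : z.im * (2 * z.re + a) = 0 := by
    linear_combination (by simpa [sq] using congrArg Complex.im hz : _ = (0 : ℝ))
  rcases mul_eq_zero.mp him with hreal | hpair
  · have hz_re : z = z.re := Complex.ext rfl (by simpa using hreal)
    rw [hz_re, Complex.norm_real, Real.norm_eq_abs]
    exact abs_lt_one_of_sq_add_mul_add_eq_zero hb ha (by simpa [hreal] using hre)
  · have hnorm : ‖z‖ ^ 2 = b := by
      rw [Complex.sq_norm, Complex.normSq_apply]
      linear_combination -hre + z.re * hpair
    exact (sq_lt_one_iff₀ (norm_nonneg z)).mp (hnorm ▸ hb)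

lemma norm_lt_one_of_cubic_eq_zero {f t : ℝ} (hf : f < 0) (ht : -f < t) (hroot : cubic f t = 0)
    {z : ℂ} (hz : cubic (f : ℂ) z = 0) (hzt : z ≠ t) : ‖z‖ < 1 := by
  have hprod : t * (t ^ 2 + t - f) = -f := by unfold cubic at hroot; linear_combination hroot
  have hb : t ^ 2 + t - f < 1 :=
    (mul_lt_mul_iff_right₀ (by linarith : 0 < t)).mp (by rw [hprod, mul_one]; exact ht)
  have ha : |t + 1| < 1 + (t ^ 2 + t - f) := by
    rw [abs_of_pos (by linarith)]
    nlinarith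
  have hroot' : cubic (f : ℂ) t = 0 := by unfold cubic at hroot ⊢; exact_mod_cast hroot
  have hquad := cubic_sub_cubic (f : ℂ) z t
  rw [hz, hroot', sub_zero, eq_comm, mul_eq_zero, sub_eq_zero] at hquad
  refine Complex.norm_lt_one_of_sq_add_mul_add_eq_zero hb ha ?_
  push_cast
  exact hquad.resolve_left hzt

theorem stmt_12 (f : ℝ) (hf1 : 1 - Real.sqrt 2 < f) (hf2 : f < 0) :
    ((-f) ^ 3 + (-f) ^ 2 - f * (-f) + f < 0) ∧
    (0 < ((-f / 5) ^ ((1 : ℝ) / 3)) ^ 3 + ((-f / 5) ^ ((1 : ℝ) / 3)) ^ 2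
          - f * ((-f / 5) ^ ((1 : ℝ) / 3)) + f) ∧
    ∃ t ∈ Set.Ioo (-f) ((-f / 5) ^ ((1 : ℝ) / 3)),
      t ^ 3 + t ^ 2 - f * t + f = 0 ∧
      ∀ z : ℂ, z ^ 3 + z ^ 2 - (f : ℂ) * z + (f : ℂ) = 0 → z ≠ (t : ℂ) →
        ‖z‖ < 1 := by
  set c := (-f / 5) ^ ((1 : ℝ) / 3)
  have hc : 0 < c := Real.rpow_pos_of_pos (by linarith) _
  have hc3 : c ^ 3 = -f / 5 := by
    simp only [c, one_div]
    exact_mod_cast Real.rpow_inv_natCast_pow (n := 3) (by linarith : 0 ≤ -f / 5) (by norm_num)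
  have hneg := cubic_neg_self_neg hf1 hf2
  have hpos := cubic_pos_of_pow_three_eq hc.ne' hc3
  have hsqrt2 : (1.4 : ℝ) < √2 := (Real.lt_sqrt (by norm_num)).mpr (by norm_num)
  have hsq : (-f) ^ 2 < 1 / 5 := by
    nlinarith [Real.sq_sqrt (show (0 : ℝ) ≤ 2 by norm_num)]
  have hlt : -f < c := lt_of_pow_lt_pow_left₀ 3 hc.le (by rw [hc3]; nlinarith)
  obtain ⟨t, ht, hroot⟩ :=
    intermediate_value_Ioo hlt.le (continuous_cubic f).continuousOn ⟨hneg, hpos⟩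
  exact ⟨hneg, hpos, t, ht, hroot,
    fun z hz hzt => norm_lt_one_of_cubic_eq_zero hf2 ht.1 hroot hz hzt⟩
end

section
/- For all f ∈ (-81/2500, 0), every complex root of the quintic p_f(z) = z^5 + z^4 - f z + f has modulus strictly less than one. -/
/-!
Write `p_f(z) = (z + 1)(z⁴ - f) + 2f`. At a root `z` with `‖z‖ ≥ 1` we get
`‖z + 1‖ (1 - |f|) ≤ 2|f|`, so `z` is within `1/10` of `-1` and hence `Re z⁴ > 0`.
On the other hand `(z + 1)⁻¹ = (z⁴ - f)/(-2f)` has real part `1/2 + Re z⁴/(2|f|) > 1/2`,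
and inversion maps the half-plane `Re > 1/2` into the open unit disc about `1`,
so `‖z‖ = ‖(z + 1) - 1‖ < 1`, a contradiction.
-/

namespace Complex

lemma norm_sub_one_lt_one_of_half_lt_re_inv {w : ℂ} (h : 1 / 2 < (w⁻¹).re) : ‖w - 1‖ < 1 := by
  have hw : w ≠ 0 := by
    rintro rfl
    norm_num at h
  have hnormSq : 0 < normSq w := normSq_pos.mpr hw
  rw [inv_re, lt_div_iff₀ hnormSq] at h
  have hsq : ‖w - 1‖ ^ 2 = normSq w - 2 * w.re + 1 := by
    rw [Complex.sq_norm, normSq_apply, normSq_apply]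
    simp only [sub_re, one_re, sub_im, one_im, sub_zero]
    ring
  nlinarith [norm_nonneg (w - 1)]

lemma norm_pow_four_sub_one_lt_one {z : ℂ} (hz : ‖z + 1‖ ≤ 1 / 10) : ‖z ^ 4 - 1‖ < 1 := by
  have hz_norm : ‖z‖ ≤ 11 / 10 := by
    calc ‖z‖ = ‖(z + 1) - 1‖ := by rw [add_sub_cancel_right]
      _ ≤ ‖z + 1‖ + ‖(1 : ℂ)‖ := norm_sub_le _ _
      _ ≤ 11 / 10 := by rw [norm_one]; linarith
  have hsub : ‖z - 1‖ ≤ 21 / 10 := by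
    calc ‖z - 1‖ ≤ ‖z‖ + ‖(1 : ℂ)‖ := norm_sub_le _ _
      _ ≤ 21 / 10 := by rw [norm_one]; linarith
  have hsq : ‖z ^ 2 + 1‖ ≤ 221 / 100 := by
    calc ‖z ^ 2 + 1‖ ≤ ‖z‖ ^ 2 + 1 :=
          (norm_add_le _ _).trans_eq (by rw [norm_pow, norm_one])
      _ ≤ 221 / 100 := by nlinarith [norm_nonneg z]
  calc ‖z ^ 4 - 1‖ = ‖z + 1‖ * ‖z - 1‖ * ‖z ^ 2 + 1‖ := by
        rw [← norm_mul, ← norm_mul]; ring_nf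
    _ ≤ 1 / 10 * (21 / 10) * (221 / 100) := by gcongr
    _ < 1 := by norm_num

lemma re_pow_four_pos {z : ℂ} (hz : ‖z + 1‖ ≤ 1 / 10) : 0 < (z ^ 4).re := by
  have h := (abs_re_le_norm (z ^ 4 - 1)).trans_lt (norm_pow_four_sub_one_lt_one hz)
  rw [sub_re, one_re, abs_lt] at h
  linarith

end Complex

open Complex

lemma quintic_eq_mul_add (f z : ℂ) :
    z ^ 5 + z ^ 4 - f * z + f = (z + 1) * (z ^ 4 - f) + 2 * f := by
  ring

lemma norm_add_one_le_of_quintic_root {f z : ℂ} (hf : ‖f‖ ≤ 1 / 21)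
    (hz : z ^ 5 + z ^ 4 - f * z + f = 0) (hz_norm : 1 ≤ ‖z‖) : ‖z + 1‖ ≤ 1 / 10 := by
  have hprod : ‖z + 1‖ * ‖z ^ 4 - f‖ = 2 * ‖f‖ := by
    rw [← norm_mul, show (z + 1) * (z ^ 4 - f) = -(2 * f) by
      linear_combination hz - quintic_eq_mul_add f z]
    simp
  have hlow : 1 - ‖f‖ ≤ ‖z ^ 4 - f‖ := by
    have h4 : 1 ≤ ‖z ^ 4‖ := by rw [norm_pow]; exact one_le_pow₀ hz_norm
    linarith [norm_sub_norm_le (z ^ 4) f]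
  nlinarith [norm_nonneg (z + 1), norm_nonneg f]

lemma re_inv_add_one_of_quintic_root {f : ℝ} (hf : f ≠ 0) {z : ℂ}
    (hz : z ^ 5 + z ^ 4 - (f : ℂ) * z + (f : ℂ) = 0) :
    ((z + 1)⁻¹).re = 1 / 2 - (z ^ 4).re / (2 * f) := by
  have hf' : (f : ℂ) ≠ 0 := ofReal_ne_zero.mpr hf
  have hinv : (z + 1)⁻¹ = (z ^ 4 - f) / (-2 * f) := by
    have hprod : (z + 1) * (z ^ 4 - f) = -2 * f := by
      linear_combination hz - quintic_eq_mul_add f z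
    have hz1 : z + 1 ≠ 0 := by
      rintro h
      rw [h, zero_mul] at hprod
      exact hf' (by linear_combination hprod / 2)
    rw [eq_div_iff (by simpa using hf'), ← hprod, inv_mul_cancel_left₀ hz1]
  rw [hinv, show (-2 * (f : ℂ)) = ((-2 * f : ℝ) : ℂ) by push_cast; ring, div_ofReal_re]
  simp only [sub_re, ofReal_re]
  field_simp
  ring

theorem stmt_14 (f : ℝ) (hf : f ∈ Set.Ioo (-81 / 2500 : ℝ) 0) :
    ∀ z : ℂ, z ^ 5 + z ^ 4 - (f : ℂ) * z + (f : ℂ) = 0 →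
      ‖z‖ < 1 := by
  obtain ⟨hf_low, hf_neg⟩ := hf
  intro z hz
  by_contra! hz_norm
  have hf_norm : ‖(f : ℂ)‖ ≤ 1 / 21 := by
    rw [norm_real, Real.norm_of_nonpos hf_neg.le]
    linarith
  have hre : 0 < (z ^ 4).re :=
    re_pow_four_pos (norm_add_one_le_of_quintic_root hf_norm hz hz_norm)
  have hhalf : 1 / 2 < ((z + 1)⁻¹).re := by
    rw [re_inv_add_one_of_quintic_root hf_neg.ne hz]
    have : (z ^ 4).re / (2 * f) < 0 := div_neg_of_pos_of_neg hre (by linarith)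
    linarith
  have := norm_sub_one_lt_one_of_half_lt_re_inv hhalf
  rw [add_sub_cancel_right] at this
  linarith
end

section
/- Let a ≥ 0, q = (a + 4a² + 2a³)/(1 + 2a), R = q + √(q² - 4a³) (assuming q² ≥ 4a³), f = (8a³ + 4a²)R - (1 + 4a)R², b = 1 + 2a, c = 2ab - R, d = 2ac - Rb. Then z^5 + z^4 - f z + f = (z² - 2a z + R)(z³ + b z² + c z + d) as polynomials. -/
theorem stmt_15 (a : ℝ) (ha : 0 ≤ a)
    (q R f b c d : ℝ)
    (hq : q = (a + 4 * a ^ 2 + 2 * a ^ 3) / (1 + 2 * a))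
    (hqa : q ^ 2 ≥ 4 * a ^ 3)
    (hR : R = q + Real.sqrt (q ^ 2 - 4 * a ^ 3))
    (hf : f = (8 * a ^ 3 + 4 * a ^ 2) * R - (1 + 4 * a) * R ^ 2)
    (hb : b = 1 + 2 * a) (hc : c = 2 * a * b - R) (hd : d = 2 * a * c - R * b) :
    ∀ z : ℂ, z ^ 5 + z ^ 4 - (f : ℂ) * z + (f : ℂ)
      = (z ^ 2 - 2 * (a : ℂ) * z + (R : ℂ)) *
        (z ^ 3 + (b : ℂ) * z ^ 2 + (c : ℂ) * z + (d : ℂ)) := by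
  have hpos : (0:ℝ) < 1 + 2 * a := by linarith
  have hq' : q * (1 + 2 * a) = a + 4 * a ^ 2 + 2 * a ^ 3 := by
    rw [hq]; field_simp
  have h1 : R ^ 2 = 2 * q * R - 4 * a ^ 3 := by
    have h := Real.sq_sqrt (by linarith : (0:ℝ) ≤ q ^ 2 - 4 * a ^ 3)
    have : (R - q) ^ 2 = q ^ 2 - 4 * a ^ 3 := by rw [hR]; simpa using h
    nlinarith [this]
  have h1c : (R:ℂ) ^ 2 = 2 * (q:ℂ) * R - 4 * (a:ℂ) ^ 3 := by exact_mod_cast h1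
  have hqc : (q:ℂ) * (1 + 2 * a) = a + 4 * (a:ℂ) ^ 2 + 2 * (a:ℂ) ^ 3 := by
    exact_mod_cast hq'
  intro z
  subst hf hb hc hd
  push_cast
  linear_combination (2 * (1 + 2 * (a:ℂ)) * z) * h1c + (4 * (R:ℂ) * z) * hqc
end

section
/- With the notation of the factorization lemma (a ≥ 0, q = (a+4a²+2a³)/(1+2a), R = q + √(q²-4a³), f = (8a³+4a²)R - (1+4a)R²), if R ≥ a², then z₁ = a + i√(R - a²) and z₂ = a - i√(R - a²) are roots of the quintic z^5 + z^4 - f z + f. -/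
theorem stmt_16 (a : ℝ) (ha : 0 ≤ a)
    (q R f : ℝ)
    (hq : q = (a + 4 * a ^ 2 + 2 * a ^ 3) / (1 + 2 * a))
    (hqa : q ^ 2 ≥ 4 * a ^ 3)
    (hR : R = q + Real.sqrt (q ^ 2 - 4 * a ^ 3))
    (hf : f = (8 * a ^ 3 + 4 * a ^ 2) * R - (1 + 4 * a) * R ^ 2)
    (hRa : R ≥ a ^ 2) :
    ∀ z : ℂ, (z = (a : ℂ) + Real.sqrt (R - a ^ 2) * Complex.I ∨
              z = (a : ℂ) - Real.sqrt (R - a ^ 2) * Complex.I) →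
      z ^ 5 + z ^ 4 - (f : ℂ) * z + (f : ℂ) = 0 := by
  intro z hz
  have h12 : (1 : ℝ) + 2 * a ≠ 0 := by positivity
  have h1 : q * (1 + 2 * a) = a + 4 * a ^ 2 + 2 * a ^ 3 := by
    rw [hq]; field_simp
  have hsq : Real.sqrt (q ^ 2 - 4 * a ^ 3) ^ 2 = q ^ 2 - 4 * a ^ 3 :=
    Real.sq_sqrt (by linarith)
  have h2 : R ^ 2 - 2 * q * R + 4 * a ^ 3 = 0 := by
    rw [hR]; nlinarith [hsq]
  have hs : Real.sqrt (R - a ^ 2) ^ 2 = R - a ^ 2 :=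
    Real.sq_sqrt (by linarith)
  set s : ℝ := Real.sqrt (R - a ^ 2) with hsdef
  have hsC : (s : ℂ) ^ 2 = (R : ℂ) - (a : ℂ) ^ 2 := by
    exact_mod_cast congrArg (Complex.ofReal) hs
  have hz2 : z ^ 2 = 2 * (a : ℂ) * z - (R : ℂ) := by
    rcases hz with h | h <;> subst h <;>
      linear_combination hsC * Complex.I ^ 2 + (R - (a:ℂ)^2) * Complex.I_sq
  have c1 : 16 * a ^ 4 - 12 * a ^ 2 * R + R ^ 2 + 8 * a ^ 3 - 4 * a * R - f = 0 := by
    rw [hf]; linear_combination (2 + 4 * a) * h2 + 4 * R * h1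
  have c0 : -(8 * a ^ 3 * R) + 4 * a * R ^ 2 + R ^ 2 - 4 * a ^ 2 * R + f = 0 := by
    rw [hf]; ring
  have c1C : 16 * (a : ℂ) ^ 4 - 12 * (a : ℂ) ^ 2 * R + (R : ℂ) ^ 2 + 8 * (a : ℂ) ^ 3
      - 4 * (a : ℂ) * R - (f : ℂ) = 0 := by exact_mod_cast congrArg (Complex.ofReal) c1
  have c0C : -(8 * (a : ℂ) ^ 3 * R) + 4 * (a : ℂ) * (R : ℂ) ^ 2 + (R : ℂ) ^ 2
      - 4 * (a : ℂ) ^ 2 * R + (f : ℂ) = 0 := by exact_mod_cast congrArg (Complex.ofReal) c0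
  linear_combination (z ^ 3 + (1 + 2 * (a : ℂ)) * z ^ 2 + (2 * a + 4 * (a : ℂ) ^ 2 - R) * z
      + (4 * (a : ℂ) ^ 2 + 8 * (a : ℂ) ^ 3 - R - 4 * (a : ℂ) * R)) * hz2 + z * c1C + c0C
end
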